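/- arXiv:1707.05412 — 2 statements merged into one kernel-verified Lean document; each statement's English description precedes it below -/
import Mathlib

section
/- Let γ : ℕ → ℂ with associated polynomials P_n(x) = Σ_{k=0}^n (γ_k/k!) D^k[x^n] for n ≥ 0. Then {P_n}_{n=0}^∞ is an orthogonal polynomial sequence if and only if γ_0 ≠ 0 and there exist constants a, b ∈ ℂ with a ≠ 0 such that γ_1 = −b·γ_0 and, for all n ≥ 2, γ_n = −b·γ_{n−1} − a(n−1)γ_{n−2}. -/
/-!
The polynomials form the Appell sequence `P n = ∑ j, (n choose j) γ (n - j) X ^ j`, so that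
`(P n)' = n P (n - 1)` and `P n (0) = γ n`.

An orthogonal sequence whose members share their leading coefficient satisfies a three-term
recurrence `X P n = P (n + 1) + β n P n + c n P (n - 1)` with `c n L (P (n - 1) ^ 2) = L (P n ^ 2)`.
Differentiating the recurrence at `n + 1` and subtracting `n + 1` times the one at `n` gives, by
linear independence, `β (n + 1) = β n` and `(n + 1) c n = n c (n + 1)`, i.e. `β n = b`, `c n = a n`
with `a ≠ 0`; the constant terms of the recurrence are then the recursion for `γ`.

Conversely, the recursion for `γ` makes the constant term and the derivative of the difference of
the two sides of `X P n = P (n + 1) + b P n + a n P (n - 1)` vanish, and by Favard's theorem the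
coordinate of `P 0` in the basis `(P n)` is a functional with `L (P n ^ 2) = γ 0 a ^ n n! ≠ 0`.
-/

open Polynomial Finset

namespace Polynomial

variable {K : Type*} [Field K]

/-- At `n = 0` the last term is `c 0 • Q 0`, because of truncated subtraction. -/
def ThreeTermRecurrence (Q : ℕ → K[X]) (β c : ℕ → K) : Prop :=
  ∀ n, X * Q n = Q (n + 1) + C (β n) * Q n + C (c n) * Q (n - 1)

lemma _root_.LinearMap.map_mul_eq_zero_of_mem_span {L : K[X] →ₗ[K] K} {s : Set K[X]}
    {p q : K[X]} (hs : ∀ r ∈ s, L (r * q) = 0) (hp : p ∈ Submodule.span K s) : L (p * q) = 0 :=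
  (Submodule.span_le (p := LinearMap.ker (L ∘ₗ LinearMap.mulRight K q))).mpr hs hp

namespace Sequence

structure IsOrthogonal (S : Sequence K) (L : K[X] →ₗ[K] K) : Prop where
  map_mul_eq_zero : ∀ m n : ℕ, m ≠ n → L (S m * S n) = 0
  map_sq_ne_zero : ∀ n : ℕ, L (S n ^ 2) ≠ 0

variable {S : Sequence K} {L : K[X] →ₗ[K] K}

lemma isUnit_leadingCoeff (S : Sequence K) (n : ℕ) : IsUnit (S n).leadingCoeff :=
  (leadingCoeff_ne_zero.mpr (S.ne_zero n)).isUnit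

lemma degree_X_mul (S : Sequence K) (n : ℕ) : (X * S n).degree = ↑(n + 1) := by
  rw [degree_mul, degree_X, S.degree_eq]
  exact_mod_cast n.one_add

lemma degree_X_mul_sub_lt (hlc : ∀ n, (S (n + 1)).leadingCoeff = (S n).leadingCoeff) (n : ℕ) :
    (X * S n - S (n + 1)).degree < ↑(n + 1) := by
  have := degree_sub_lt_left (p := X * S n) (q := S (n + 1)) (by rw [degree_X_mul, S.degree_eq])
    (mul_ne_zero X_ne_zero (S.ne_zero n)) (by rw [leadingCoeff_mul, leadingCoeff_X, one_mul, hlc])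
  rwa [degree_X_mul] at this

namespace IsOrthogonal

variable (h : S.IsOrthogonal L)
include h

lemma map_mul_eq_zero_of_degree_lt {p : K[X]} {n : ℕ} (hp : p.degree < n) :
    L (p * S n) = 0 := by
  refine L.map_mul_eq_zero_of_mem_span (s := S '' Set.Iio n) ?_ ?_
  · rintro _ ⟨i, hi, rfl⟩
    exact h.map_mul_eq_zero i n (Set.mem_Iio.mp hi).ne
  · rw [S.span_degreeLT fun i _ => S.isUnit_leadingCoeff i]
    exact mem_degreeLT.mpr hp

lemma repr_mul_map_sq (p : K[X]) (j : ℕ) :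
    (S.basis S.isUnit_leadingCoeff).repr p j * L (S j ^ 2) = L (p * S j) := by
  set B := S.basis S.isUnit_leadingCoeff
  have hB : L (S j ^ 2) • B.coord j = L ∘ₗ LinearMap.mulRight K (S j) := by
    refine B.ext fun i => ?_
    have hrepr : B.repr (S i) = Finsupp.single i 1 := by simpa [B] using B.repr_self i
    rcases eq_or_ne i j with rfl | hij
    · simp [B, hrepr, sq]
    · simp [B, hrepr, h.map_mul_eq_zero i j hij, hij]
  simpa [mul_comm] using LinearMap.congr_fun hB p

variable (hlc : ∀ n, (S (n + 1)).leadingCoeff = (S n).leadingCoeff)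
include hlc

lemma repr_X_mul_sub_eq_zero {n j : ℕ} (hjn : j ≠ n) (hjn' : j ≠ n - 1) :
    (S.basis S.isUnit_leadingCoeff).repr (X * S n - S (n + 1)) j = 0 := by
  have hL : L ((X * S n - S (n + 1)) * S j) = 0 := by
    rcases lt_or_gt_of_ne hjn with hj | hj
    · have hXj : (X * S j).degree < (n : WithBot ℕ) := by
        rw [degree_X_mul]; exact_mod_cast (by omega : j + 1 < n)
      rw [show (X * S n - S (n + 1)) * S j = X * S j * S n - S (n + 1) * S j by ring, map_sub,
        h.map_mul_eq_zero_of_degree_lt hXj, h.map_mul_eq_zero (n + 1) j (by omega), sub_zero]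
    · exact h.map_mul_eq_zero_of_degree_lt
        ((S.degree_X_mul_sub_lt hlc n).trans_le (by exact_mod_cast hj))
  rw [← h.repr_mul_map_sq] at hL
  exact (mul_eq_zero.mp hL).resolve_right (h.map_sq_ne_zero j)

lemma X_mul_sub_eq_sum (n : ℕ) : X * S n - S (n + 1)
    = ∑ i ∈ {n, n - 1}, (S.basis S.isUnit_leadingCoeff).repr (X * S n - S (n + 1)) i • S i := by
  set B := S.basis S.isUnit_leadingCoeff
  conv_lhs => rw [← B.linearCombination_repr (X * S n - S (n + 1))]
  rw [Finsupp.linearCombination_apply,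
    Finsupp.sum_of_support_subset (s := {n, n - 1}) _ ?_ _ (by simp)]
  · simp [B]
  · intro i hi
    by_contra hi'
    simp only [Finset.mem_insert, Finset.mem_singleton, not_or] at hi'
    exact Finsupp.mem_support_iff.mp hi (h.repr_X_mul_sub_eq_zero hlc hi'.1 hi'.2)

lemma exists_threeTermRecurrence : ∃ β c : ℕ → K, c 0 = 0 ∧ ThreeTermRecurrence S β c := by
  have key : ∀ n, ∃ b c : K, (n = 0 → c = 0) ∧
      X * S n = S (n + 1) + C b * S n + C c * S (n - 1) := by
    intro n
    have hsum := h.X_mul_sub_eq_sum hlc n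
    set d := (S.basis S.isUnit_leadingCoeff).repr (X * S n - S (n + 1))
    cases n with
    | zero =>
      refine ⟨d 0, 0, fun _ => rfl, ?_⟩
      simp only [Finset.insert_eq_of_mem, Finset.mem_singleton, Finset.sum_singleton,
        smul_eq_C_mul] at hsum
      simp only [C_0, zero_mul, add_zero]
      linear_combination hsum
    | succ m =>
      refine ⟨d (m + 1), d m, by simp, ?_⟩
      rw [Finset.sum_pair (by omega), smul_eq_C_mul, smul_eq_C_mul, Nat.add_sub_cancel] at hsum
      rw [Nat.add_sub_cancel]
      linear_combination hsum
  choose β c hc0 hrec using key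
  exact ⟨β, c, hc0 0 rfl, hrec⟩

end IsOrthogonal

section Recurrence

variable {β c : ℕ → K} (hrec : ThreeTermRecurrence S β c)
include hrec

lemma IsOrthogonal.mul_map_sq_eq (h : S.IsOrthogonal L) (n : ℕ) :
    c (n + 1) * L (S n ^ 2) = L (S (n + 1) ^ 2) := by
  have h₁ : X * S (n + 1) * S n
      = S (n + 2) * S n + β (n + 1) • (S (n + 1) * S n) + c (n + 1) • S n ^ 2 := by
    rw [hrec, smul_eq_C_mul, smul_eq_C_mul, Nat.add_sub_cancel]; ring
  have h₂ : X * S n * S (n + 1)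
      = S (n + 1) ^ 2 + β n • (S n * S (n + 1)) + c n • (S (n - 1) * S (n + 1)) := by
    rw [hrec, smul_eq_C_mul, smul_eq_C_mul]; ring
  replace h₁ := congrArg L h₁
  replace h₂ := congrArg L h₂
  simp only [map_add, map_smul, smul_eq_mul, h.map_mul_eq_zero _ _ (show n + 2 ≠ n by omega),
    h.map_mul_eq_zero _ _ (show n + 1 ≠ n by omega),
    h.map_mul_eq_zero _ _ (show n ≠ n + 1 by omega),
    h.map_mul_eq_zero _ _ (show n - 1 ≠ n + 1 by omega), mul_zero, zero_add, add_zero] at h₁ h₂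
  rw [← h₁, ← h₂, mul_right_comm]

lemma map_X_pow_succ_mul (j n : ℕ) : L (X ^ (j + 1) * S n)
    = L (X ^ j * S (n + 1)) + β n * L (X ^ j * S n) + c n * L (X ^ j * S (n - 1)) := by
  have : X ^ (j + 1) * S n
      = X ^ j * S (n + 1) + β n • (X ^ j * S n) + c n • (X ^ j * S (n - 1)) := by
    rw [pow_succ, mul_assoc, hrec, smul_eq_C_mul, smul_eq_C_mul]; ring
  rw [this, map_add, map_add, map_smul, map_smul, smul_eq_mul, smul_eq_mul]

variable (hL : ∀ n, L (S (n + 1)) = 0)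
include hL

lemma map_X_pow_mul_eq_zero_of_lt {j n : ℕ} (hjn : j < n) : L (X ^ j * S n) = 0 := by
  induction j generalizing n with
  | zero => obtain ⟨m, rfl⟩ := Nat.exists_eq_add_of_lt hjn; simpa using hL (0 + m)
  | succ j ih =>
    rw [map_X_pow_succ_mul hrec, ih (by omega), ih (by omega), ih (by omega)]
    ring

lemma map_X_pow_mul_self (n : ℕ) :
    L (X ^ n * S n) = (∏ i ∈ range n, c (i + 1)) * L (S 0) := by
  induction n with
  | zero => simp
  | succ n ih =>
    rw [map_X_pow_succ_mul hrec, map_X_pow_mul_eq_zero_of_lt hrec hL (by omega),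
      map_X_pow_mul_eq_zero_of_lt hrec hL (by omega), Nat.add_sub_cancel, ih, prod_range_succ]
    ring

end Recurrence

/-- Favard's theorem. -/
theorem isOrthogonal_coord_zero_of_threeTermRecurrence {β c : ℕ → K}
    (hrec : ThreeTermRecurrence S β c) (hc : ∀ n, c (n + 1) ≠ 0) :
    S.IsOrthogonal ((S.basis S.isUnit_leadingCoeff).coord 0) := by
  classical
  set L := (S.basis S.isUnit_leadingCoeff).coord 0
  have hLS : ∀ n, L (S n) = if n = 0 then 1 else 0 := fun n => by
    simpa [L, Module.Basis.coord_apply, Finsupp.single_apply, eq_comm]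
      using congrArg (· 0) ((S.basis S.isUnit_leadingCoeff).repr_self n)
  have hL : ∀ n, L (S (n + 1)) = 0 := fun n => by simp [hLS]
  have hlow : ∀ {p : K[X]} {n : ℕ}, p.degree < n → L (p * S n) = 0 := fun {p n} hp => by
    refine L.map_mul_eq_zero_of_mem_span (s := ↑((range n).image (X ^ ·) : Finset K[X])) ?_ ?_
    · simp only [coe_image, coe_range, Set.mem_image, Set.mem_Iio]
      rintro _ ⟨j, hj, rfl⟩
      exact map_X_pow_mul_eq_zero_of_lt hrec hL hj
    · rw [← degreeLT_eq_span_X_pow]; exact mem_degreeLT.mpr hp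
  refine ⟨fun m n hmn => ?_, fun n => ?_⟩
  · rcases lt_or_gt_of_ne hmn with hmn | hmn
    · exact hlow (by rw [S.degree_eq]; exact_mod_cast hmn)
    · rw [mul_comm]; exact hlow (by rw [S.degree_eq]; exact_mod_cast hmn)
  · have hsplit : S n ^ 2 = (S n).eraseLead * S n + (S n).leadingCoeff • (X ^ n * S n) := by
      have := eraseLead_add_C_mul_X_pow (S n)
      rw [S.natDegree_eq] at this
      rw [smul_eq_C_mul]
      linear_combination (-S n) * this
    rw [hsplit, map_add, map_smul, hlow ((degree_eraseLead_lt (S.ne_zero n)).trans_eq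
      (S.degree_eq n)), map_X_pow_mul_self hrec hL, hLS, if_pos rfl, zero_add, smul_eq_mul,
      mul_one]
    exact mul_ne_zero (leadingCoeff_ne_zero.mpr (S.ne_zero n))
      (prod_ne_zero_iff.mpr fun i _ => hc i)

end Sequence

end Polynomial

section Appell

variable {K : Type*} [Field K] (γ : ℕ → K)

noncomputable def appell (n : ℕ) : K[X] :=
  ∑ j ∈ range (n + 1), C (γ (n - j) * n.choose j) * X ^ j

lemma sum_iterate_derivative_eq_appell [CharZero K] (n : ℕ) :
    ∑ k ∈ range (n + 1), C (γ k / k.factorial) * derivative^[k] (X ^ n) = appell γ n := by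
  rw [appell, ← sum_range_reflect]
  refine sum_congr rfl fun j hj => ?_
  have hj : j ≤ n := Nat.lt_succ_iff.mp (mem_range.mp hj)
  rw [Nat.add_sub_cancel, iterate_derivative_X_pow_eq_C_mul, Nat.sub_sub_self hj,
    Nat.descFactorial_eq_factorial_mul_choose, ← mul_assoc, ← C_mul, Nat.choose_symm hj]
  congr 2
  have : ((n - j).factorial : K) ≠ 0 := Nat.cast_ne_zero.mpr (Nat.factorial_ne_zero _)
  push_cast
  field_simp

lemma coeff_appell (n j : ℕ) :
    (appell γ n).coeff j = if j ≤ n then γ (n - j) * n.choose j else 0 := by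
  simp only [appell, finsetSum_coeff, coeff_C_mul, coeff_X_pow, mul_ite, mul_one, mul_zero,
    sum_ite_eq, mem_range, Nat.lt_succ_iff]

@[simp]
lemma coeff_appell_zero (n : ℕ) : (appell γ n).coeff 0 = γ n := by
  simp [coeff_appell]

lemma appell_zero : appell γ 0 = C (γ 0) := by
  simp [appell]

lemma derivative_appell (n : ℕ) : derivative (appell γ n) = C (n : K) * appell γ (n - 1) := by
  cases n with
  | zero => simp [appell]
  | succ m =>
    rw [appell, derivative_sum, sum_range_succ', Nat.add_sub_cancel, appell, mul_sum]
    simp only [derivative_C_mul, derivative_X_pow, pow_zero, derivative_one, mul_zero, add_zero]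
    refine sum_congr rfl fun i _ => ?_
    have h := congrArg (Nat.cast : ℕ → K) (Nat.add_one_mul_choose_eq m i)
    push_cast at h
    rw [Nat.add_sub_add_right, Nat.add_sub_cancel, ← mul_assoc, ← C_mul, ← mul_assoc, ← C_mul]
    push_cast
    congr 2
    linear_combination γ (m - i) * h.symm

variable {γ}

lemma degree_appell (hγ : γ 0 ≠ 0) (n : ℕ) : (appell γ n).degree = n := by
  refine le_antisymm (degree_le_iff_coeff_zero _ _ |>.mpr fun j hj => ?_)
    (le_degree_of_ne_zero (by simpa [coeff_appell] using hγ))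
  rw [coeff_appell, if_neg (by exact_mod_cast hj.not_ge)]

lemma leadingCoeff_appell (hγ : γ 0 ≠ 0) (n : ℕ) : (appell γ n).leadingCoeff = γ 0 := by
  simp [leadingCoeff, natDegree_eq_of_degree_eq_some (degree_appell hγ n), coeff_appell]

lemma recursion_iff_forall_add_eq_zero (a b : K) :
    (γ 1 = -b * γ 0 ∧ ∀ n : ℕ, 2 ≤ n → γ n = -b * γ (n - 1) - a * ((n : K) - 1) * γ (n - 2)) ↔
      ∀ n : ℕ, γ (n + 1) + b * γ n + a * n * γ (n - 1) = 0 := by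
  constructor
  · rintro ⟨h₁, h⟩ (_ | n)
    · simp [h₁]
    · have := h (n + 2) (by omega)
      simp only [Nat.add_sub_cancel, show n + 2 - 1 = n + 1 by omega] at this ⊢
      push_cast at this ⊢
      linear_combination this
  · intro h
    refine ⟨by linear_combination h 0, fun n hn => ?_⟩
    obtain ⟨m, rfl⟩ := Nat.exists_eq_add_of_le' hn
    have := h (m + 1)
    simp only [Nat.add_sub_cancel] at this ⊢
    push_cast at this ⊢
    linear_combination this

lemma threeTermRecurrence_appell_iff [CharZero K] (a b : K) :
    ThreeTermRecurrence (appell γ) (fun _ => b) (fun n => a * n) ↔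
      (γ 1 = -b * γ 0 ∧
        ∀ n : ℕ, 2 ≤ n → γ n = -b * γ (n - 1) - a * ((n : K) - 1) * γ (n - 2)) := by
  set r : ℕ → K[X] := fun n =>
    appell γ (n + 1) + C b * appell γ n + C (a * n) * appell γ (n - 1) - X * appell γ n
  have hr' : ∀ n, derivative (r n) = C (n : K) * r (n - 1) := by
    rintro (_ | n)
    · simp [r, derivative_appell, appell_zero]
    · simp only [r, derivative_add, derivative_sub, derivative_mul, derivative_C, derivative_X,
        derivative_appell, zero_mul, zero_add, one_mul, Nat.add_sub_cancel]
      push_cast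
      simp only [map_add, map_mul, map_natCast, map_one]
      ring
  have hr : (∀ n, r n = 0) ↔ ∀ n, (r n).coeff 0 = 0 := by
    refine ⟨fun h n => by rw [h, coeff_zero], fun h n => ?_⟩
    induction n with
    | zero => rw [eq_C_of_derivative_eq_zero (p := r 0) (by simp [hr']), h, C_0]
    | succ n ih =>
      rw [eq_C_of_derivative_eq_zero (p := r (n + 1)) (by rw [hr', Nat.add_sub_cancel, ih,
        mul_zero]), h, C_0]
  have hr0 : ∀ n, (r n).coeff 0 = γ (n + 1) + b * γ n + a * n * γ (n - 1) := fun n => by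
    simp [r, mul_coeff_zero]
  rw [recursion_iff_forall_add_eq_zero]
  unfold ThreeTermRecurrence
  refine (forall_congr' fun n => ?_).trans (hr.trans (forall_congr' fun n => by rw [hr0]))
  exact eq_comm.trans sub_eq_zero.symm

noncomputable def appellSequence (hγ : γ 0 ≠ 0) : Polynomial.Sequence K :=
  ⟨appell γ, degree_appell hγ⟩

@[simp]
lemma appellSequence_apply (hγ : γ 0 ≠ 0) (n : ℕ) : appellSequence hγ n = appell γ n := rfl

lemma threeTermRecurrence_appell_step [CharZero K] (hγ : γ 0 ≠ 0) {β c : ℕ → K} (hc0 : c 0 = 0)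
    (hrec : ThreeTermRecurrence (appell γ) β c) (n : ℕ) :
    β (n + 1) = β n ∧ (n + 1) * c n = n * c (n + 1) := by
  have hdiff := congrArg derivative (hrec (n + 1))
  simp only [derivative_mul, derivative_X, derivative_add, derivative_C, derivative_appell,
    zero_mul, zero_add, one_mul, Nat.add_sub_cancel] at hdiff
  have hE : ((n + 1) * (β n - β (n + 1))) • appell γ n
      + ((n + 1) * c n - n * c (n + 1)) • appell γ (n - 1) = 0 := by
    rw [smul_eq_C_mul, smul_eq_C_mul]
    simp only [map_mul, map_sub, map_add, map_natCast, map_one] at hdiff ⊢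
    push_cast at hdiff ⊢
    linear_combination hdiff - ((n : K[X]) + 1) * hrec n
  cases n with
  | zero =>
    rw [hc0, ← add_smul] at hE
    have := (smul_eq_zero.mp hE).resolve_right (by simpa [appell_zero] using hγ)
    constructor <;> [linear_combination -this; simp [hc0]]
  | succ m =>
    have hind := (LinearIndepOn.pair_iff (appellSequence hγ) (show m + 1 ≠ m by omega)).mp
      ((appellSequence hγ).linearIndependent.linearIndepOn _)
    obtain ⟨hβ, hc⟩ := hind _ _ (by simpa using hE)
    have hm : (m : K) + 1 + 1 ≠ 0 := by exact_mod_cast Nat.succ_ne_zero (m + 1)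
    push_cast at hc ⊢
    exact ⟨by linear_combination -((mul_eq_zero.mp hβ).resolve_left hm), by linear_combination hc⟩

lemma threeTermRecurrence_appell_coeffs [CharZero K] (hγ : γ 0 ≠ 0) {β c : ℕ → K}
    (hc0 : c 0 = 0) (hrec : ThreeTermRecurrence (appell γ) β c) :
    β = (fun _ => β 0) ∧ c = fun n : ℕ => c 1 * n := by
  have key : ∀ n, β n = β 0 ∧ c n = c 1 * n := by
    intro n
    induction n with
    | zero => simp [hc0]
    | succ n ih =>
      obtain ⟨hβ, hc⟩ := threeTermRecurrence_appell_step hγ hc0 hrec n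
      refine ⟨hβ.trans ih.1, ?_⟩
      rcases eq_or_ne n 0 with rfl | hn
      · simp
      · apply mul_left_cancel₀ (Nat.cast_ne_zero.mpr hn : (n : K) ≠ 0)
        push_cast
        linear_combination -hc + (n + 1) * ih.2
  exact ⟨funext fun n => (key n).1, funext fun n => (key n).2⟩

end Appell

/-- The sequence `P n = ∑_{k=0}^n (γ k / k!) D^k[x^n]` is an orthogonal
polynomial sequence iff `γ 0 ≠ 0` and there are constants `a ≠ 0`, `b` with
`γ 1 = -b γ 0` and `γ n = -b γ (n-1) - a(n-1) γ (n-2)` for all `n ≥ 2`. -/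
theorem stmt_3 (γ : ℕ → ℂ) (P : ℕ → Polynomial ℂ)
    (hP : ∀ n : ℕ, P n = ∑ k ∈ Finset.range (n + 1),
      Polynomial.C (γ k / (k.factorial : ℂ)) * Polynomial.derivative^[k] (Polynomial.X ^ n)) :
    (∃ L : Polynomial ℂ →ₗ[ℂ] ℂ,
        (∀ n : ℕ, (P n).degree = n) ∧
        (∀ m n : ℕ, m ≠ n → L (P m * P n) = 0) ∧
        (∀ n : ℕ, L (P n ^ 2) ≠ 0)) ↔
    (γ 0 ≠ 0 ∧ ∃ a b : ℂ, a ≠ 0 ∧ γ 1 = -b * γ 0 ∧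
      ∀ n : ℕ, 2 ≤ n → γ n = -b * γ (n - 1) - a * ((n : ℂ) - 1) * γ (n - 2)) := by
  obtain rfl : P = appell γ := funext fun n => (hP n).trans (sum_iterate_derivative_eq_appell γ n)
  constructor
  · rintro ⟨L, hdeg, horth, hsq⟩
    have hγ : γ 0 ≠ 0 := fun h0 => by simpa [appell_zero, h0] using hdeg 0
    have hS : (appellSequence hγ).IsOrthogonal L := ⟨horth, hsq⟩
    obtain ⟨β, c, hc0, hrec⟩ := hS.exists_threeTermRecurrence fun n => by
      simp [leadingCoeff_appell hγ]
    have ha : c 1 ≠ 0 := left_ne_zero_of_mul ((hS.mul_map_sq_eq hrec 0).symm ▸ hsq 1)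
    obtain ⟨hβ, hc⟩ := threeTermRecurrence_appell_coeffs hγ hc0 hrec
    rw [hβ, hc] at hrec
    exact ⟨hγ, c 1, β 0, ha, (threeTermRecurrence_appell_iff _ _).mp hrec⟩
  · rintro ⟨hγ, a, b, ha, hrec⟩
    have hS := Sequence.isOrthogonal_coord_zero_of_threeTermRecurrence (S := appellSequence hγ)
      ((threeTermRecurrence_appell_iff a b).mpr hrec)
      fun n => mul_ne_zero ha (Nat.cast_ne_zero.mpr n.succ_ne_zero)
    exact ⟨_, degree_appell hγ, hS.map_mul_eq_zero, hS.map_sq_ne_zero⟩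
end

section
/- Let α, β ∈ ℝ, and let γ_k be the k-th derivative at 0 of the function x ↦ exp(−(α/2)x² − βx) on ℝ. Then for every n ≥ 0, Σ_{k=0}^n (γ_k/k!) D^k[x^n] = H_n^α(x − β), where H_n^α(x − β) denotes the composition of the generalized Hermite polynomial H_n^α with the polynomial x − β. -/
open Polynomial Finset

/-!
Write `c k = γ k / k!` and `T = ∑ c k • D^k`. From `f' = (-α x - β) f` one gets
`(k + 2) c (k + 2) = -β c (k + 1) - α c k`, i.e. the series `A t = ∑ c k t^k` solves
`A' = (-β - α t) A`. Leibniz's rule `D^k (p X) = (D^k p) X + k D^(k-1) p` gives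
`T (p X) = (T p) X + T' p` with `T' = ∑ (k + 1) c (k + 1) • D^k = -β T - α D T`. As `T` commutes
with `D`, the polynomials `P n = T (X^n)` satisfy `D P (n + 1) = (n + 1) P n`, hence
`P (n + 1) = (X - β) P n - α n P (n - 1)`, which is the recurrence of `H_n^α (X - β)`.
-/

namespace Polynomial

variable {R : Type*} [CommRing R]

noncomputable def diffOp (c : ℕ → R) (N : ℕ) (p : R[X]) : R[X] :=
  ∑ k ∈ range N, C (c k) * derivative^[k] p

variable (c : ℕ → R)

@[simp] lemma diffOp_zero (p : R[X]) : diffOp c 0 p = 0 := rfl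

lemma diffOp_succ (N : ℕ) (p : R[X]) :
    diffOp c (N + 1) p = diffOp c N p + C (c N) * derivative^[N] p :=
  sum_range_succ _ _

lemma diffOp_add_eq_of_iterate_derivative_eq_zero {N : ℕ} {p : R[X]}
    (hp : derivative^[N] p = 0) (m : ℕ) : diffOp c (N + m) p = diffOp c N p := by
  rw [diffOp, sum_range_add, diffOp, add_eq_left]
  refine sum_eq_zero fun j _ => ?_
  rw [add_comm, Function.iterate_add_apply, hp, iterate_derivative_zero, mul_zero]

lemma derivative_diffOp (N : ℕ) (p : R[X]) :
    derivative (diffOp c N p) = diffOp c N (derivative p) := by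
  simp only [diffOp, derivative_sum, derivative_C_mul, ← Function.iterate_succ_apply' derivative,
    Function.iterate_succ_apply]

lemma diffOp_C_mul (N : ℕ) (r : R) (p : R[X]) :
    diffOp c N (C r * p) = C r * diffOp c N p := by
  simp only [diffOp, iterate_derivative_C_mul, mul_sum]
  exact sum_congr rfl fun _ _ => by ring

lemma diffOp_succ_mul_X (N : ℕ) (p : R[X]) :
    diffOp c (N + 1) (p * X) =
      diffOp c (N + 1) p * X + diffOp (fun k => (k + 1) * c (k + 1)) N p := by
  induction N with
  | zero => simp [diffOp_succ, mul_assoc]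
  | succ N ih =>
    rw [diffOp_succ _ (N + 1) (p * X), ih, iterate_derivative_mul_X, Nat.add_sub_cancel]
    simp only [diffOp_succ, nsmul_eq_mul, C_mul, C_add, C_1, map_natCast, Nat.cast_add_one]
    ring

lemma iterate_derivative_X_pow_eq_zero (n : ℕ) : derivative^[n + 1] (X ^ n : R[X]) = 0 :=
  iterate_derivative_eq_zero (Nat.lt_succ_of_le (natDegree_X_pow_le n))

/-- The Appell sequence attached to the power series `∑ c k t^k`. -/
noncomputable def appell (c : ℕ → R) (n : ℕ) : R[X] :=
  diffOp c (n + 1) (X ^ n)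

lemma appell_zero : appell c 0 = C (c 0) := by
  simp [appell, diffOp_succ]

lemma derivative_appell_succ (n : ℕ) :
    derivative (appell c (n + 1)) = C ((n : R) + 1) * appell c n := by
  rw [appell, derivative_diffOp, derivative_X_pow, Nat.add_sub_cancel, Nat.cast_add_one,
    diffOp_C_mul, diffOp_add_eq_of_iterate_derivative_eq_zero _ (iterate_derivative_X_pow_eq_zero n),
    appell]

/- `(k + 1) c (k + 1)` are the coefficients of `A'` for `A t = ∑ c k t^k`: the hypotheses say
`A' = (a + b t) A`, as for `A t = exp (a t + b t^2 / 2)`. -/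
variable {c} {a b : R} (hc₁ : c 1 = a * c 0)
  (hc : ∀ k : ℕ, (k + 2) * c (k + 2) = a * c (k + 1) + b * c k)
include hc₁ hc

lemma diffOp_succ_shift (N : ℕ) (p : R[X]) :
    diffOp (fun k => (k + 1) * c (k + 1)) (N + 1) p =
      C a * diffOp c (N + 1) p + C b * diffOp c N (derivative p) := by
  induction N with
  | zero => simp [diffOp_succ, hc₁, C_mul, mul_assoc]
  | succ N ih =>
    have hcN : ((N + 1 : ℕ) + 1) * c (N + 1 + 1) = a * c (N + 1) + b * c N := by
      rw [Nat.cast_add_one, add_assoc, one_add_one_eq_two]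
      exact hc N
    rw [diffOp_succ _ (N + 1), ih, hcN]
    simp only [diffOp_succ, ← Function.iterate_succ_apply, C_add, C_mul]
    ring

lemma appell_succ (n : ℕ) :
    appell c (n + 1) = (X + C a) * appell c n + C b * derivative (appell c n) := by
  have hD : derivative (appell c n) = diffOp c n (derivative (X ^ n)) := by
    rw [appell, derivative_diffOp,
      diffOp_add_eq_of_iterate_derivative_eq_zero (N := n) _ (iterate_derivative_X_pow_eq_zero n)]
  rw [appell, pow_succ, diffOp_succ_mul_X, diffOp_add_eq_of_iterate_derivative_eq_zero _
    (iterate_derivative_X_pow_eq_zero n), diffOp_succ_shift hc₁ hc, hD, appell]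
  ring

lemma appell_succ_succ (n : ℕ) :
    appell c (n + 2) = (X + C a) * appell c (n + 1) + C (b * (n + 1)) * appell c n := by
  rw [appell_succ hc₁ hc (n + 1), derivative_appell_succ, C_mul, mul_assoc]

lemma appell_eq_comp_X_add_C (hc₀ : c 0 = 1) {H : ℕ → R[X]} (hH₀ : H 0 = 1) (hH₁ : H 1 = X)
    (hH : ∀ n : ℕ, H (n + 2) = X * H (n + 1) + C (b * (n + 1)) * H n) (n : ℕ) :
    appell c n = (H n).comp (X + C a) := by
  induction n using Nat.twoStepInduction with
  | zero => rw [appell_zero, hc₀, hH₀, one_comp, C_1]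
  | one =>
    rw [appell_succ hc₁ hc, appell_zero, hc₀, C_1, derivative_one, hH₁, X_comp, mul_zero,
      add_zero, mul_one]
  | more n ih₀ ih₁ =>
    rw [appell_succ_succ hc₁ hc, ih₀, ih₁, hH, add_comp, mul_comp, mul_comp, X_comp, C_comp]

end Polynomial

section TaylorCoefficients

open scoped ContDiff

variable {𝕜 : Type*} [NontriviallyNormedField 𝕜]

lemma iteratedDeriv_affine_add_two (u v : 𝕜) (i : ℕ) (x : 𝕜) :
    iteratedDeriv (i + 2) (fun y => u * y + v) x = 0 := by
  have : deriv (fun y : 𝕜 => u * y + v) = fun _ => u := by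
    ext y; simp [deriv_add_const]
  rw [iteratedDeriv_succ', iteratedDeriv_succ', this, deriv_const']
  exact iteratedDeriv_const_zero

lemma iteratedDeriv_succ_affine_mul {h : 𝕜 → 𝕜} {k : ℕ} {x : 𝕜}
    (hh : ContDiffAt 𝕜 (k + 1 : ℕ) h x) (u v : 𝕜) :
    iteratedDeriv (k + 1) (fun y => (u * y + v) * h y) x =
      (u * x + v) * iteratedDeriv (k + 1) h x + (k + 1) * u * iteratedDeriv k h x := by
  rw [iteratedDeriv_fun_mul (by fun_prop) hh, sum_range_succ', sum_range_succ']
  simp only [iteratedDeriv_affine_add_two, mul_zero, Nat.reduceSubDiff, zero_mul, sum_const_zero,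
    zero_add, Nat.choose_one_right, Nat.cast_add, Nat.cast_one, iteratedDeriv_one,
    deriv_add_const', deriv_const_mul_id', add_tsub_cancel_right, Nat.choose_zero_right,
    iteratedDeriv_zero, one_mul, tsub_zero]
  ring

lemma add_two_mul_taylorCoeff_of_deriv_eq [CharZero 𝕜] {f : 𝕜 → 𝕜} {x : 𝕜}
    (hf : ContDiffAt 𝕜 ∞ f x) {u v : 𝕜} (hf' : deriv f = fun y => (u * y + v) * f y) (k : ℕ) :
    (k + 2) * (iteratedDeriv (k + 2) f x / (k + 2).factorial) =
      (u * x + v) * (iteratedDeriv (k + 1) f x / (k + 1).factorial) +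
        u * (iteratedDeriv k f x / k.factorial) := by
  have hrec : iteratedDeriv (k + 2) f x =
      (u * x + v) * iteratedDeriv (k + 1) f x + (k + 1) * u * iteratedDeriv k f x := by
    rw [iteratedDeriv_succ', hf', iteratedDeriv_succ_affine_mul (hf.of_le (by exact_mod_cast le_top))]
  have hk₁ : (k : 𝕜) + 1 ≠ 0 := by exact_mod_cast k.succ_ne_zero
  have hk₂ : (k : 𝕜) + 1 + 1 ≠ 0 := by exact_mod_cast (k + 1).succ_ne_zero
  have hk : (k.factorial : 𝕜) ≠ 0 := by exact_mod_cast k.factorial_ne_zero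
  rw [hrec, Nat.factorial_succ (k + 1), Nat.factorial_succ k]
  push_cast
  field_simp
  ring

end TaylorCoefficients

lemma deriv_exp_quadratic (α β : ℝ) :
    deriv (fun x : ℝ => Real.exp (-(α / 2) * x ^ 2 - β * x)) =
      fun x => (-α * x + -β) * Real.exp (-(α / 2) * x ^ 2 - β * x) := by
  ext x
  have hq : HasDerivAt (fun x : ℝ => -(α / 2) * x ^ 2 - β * x) (-α * x + -β) x :=
    (((hasDerivAt_pow 2 x).const_mul (-(α / 2))).sub ((hasDerivAt_id' x).const_mul β)).congr_deriv
      (by push_cast; ring)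
  rw [hq.exp.deriv, mul_comm]

/-- With `γ k` the k-th derivative at 0 of `x ↦ exp(-(α/2)x² - βx)` and
`H n` the generalized Hermite polynomials (recurrence `H n = x H (n-1) - α(n-1) H (n-2)`,
`H 0 = 1`, `H 1 = x`), one has `∑_{k=0}^n (γ k / k!) D^k[x^n] = H_n^α(x - β)`. -/
theorem stmt_6 (α β : ℝ) (γ : ℕ → ℝ)
    (hγ : ∀ k : ℕ, γ k =
      iteratedDeriv k (fun x : ℝ => Real.exp (-(α / 2) * x ^ 2 - β * x)) 0)
    (H : ℕ → Polynomial ℝ) (hH0 : H 0 = 1) (hH1 : H 1 = Polynomial.X)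
    (hH : ∀ n : ℕ, 2 ≤ n →
      H n = Polynomial.X * H (n - 1) - Polynomial.C (α * ((n : ℝ) - 1)) * H (n - 2)) :
    ∀ n : ℕ,
      ∑ k ∈ Finset.range (n + 1),
        Polynomial.C (γ k / (k.factorial : ℝ)) * Polynomial.derivative^[k] (Polynomial.X ^ n)
      = (H n).comp (Polynomial.X - Polynomial.C β) := by
  intro n
  set c : ℕ → ℝ := fun k => γ k / k.factorial
  have hf' := deriv_exp_quadratic α β
  have hc₀ : c 0 = 1 := by simp [c, hγ]
  have hc₁ : c 1 = -β * c 0 := by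
    simp only [c, hγ, iteratedDeriv_one, hf']
    simp
  have hc (k : ℕ) : (k + 2) * c (k + 2) = -β * c (k + 1) + -α * c k := by
    simpa [c, hγ] using add_two_mul_taylorCoeff_of_deriv_eq (x := 0) (by fun_prop) hf' k
  have hH' (m : ℕ) : H (m + 2) = X * H (m + 1) + C (-α * (m + 1)) * H m := by
    have hcoef : α * (((m + 2 : ℕ) : ℝ) - 1) = α * (m + 1) := by
      push_cast
      ring
    rw [hH (m + 2) (by omega), hcoef, Nat.add_sub_cancel, show m + 2 - 1 = m + 1 from rfl, neg_mul,
      C_neg]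
    ring
  rw [sub_eq_add_neg, ← C_neg]
  exact appell_eq_comp_X_add_C hc₁ hc hc₀ hH0 hH1 hH' n
end
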